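/- Let P be a finite set of l colors, X an ideal of edge P-colored complete graphs under the discrete containment, and for each color b let Y^(b) be the image of X under the recoloring R_b (edges colored b become 1, all others 2). Then for every n ≥ 1 and every color c, |Y^(c)_n| ≤ |X_n| ≤ ∏_{b ∈ P} |Y^(b)_n|, where X_n denotes the set of elements of X of size n. -/

import Mathlib

/-- A (directed representation of an) edge: a pair of vertices `p` with `p.1 < p.2`. -/
abbrev Edge (n : ℕ) := {p : Fin n × Fin n // p.1 < p.2}

/-- An edge-`C`-colored complete graph: a number of vertices together with a coloring
of all edges by elements of `C`. -/
abbrev Coloring (C : Type) := (n : ℕ) × (Edge n → C)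

/-- Build an edge from natural numbers `i < j < n`. -/
def mkE {n : ℕ} (i j : ℕ) (hij : i < j) (hj : j < n) : Edge n :=
  ⟨(⟨i, lt_trans hij hj⟩, ⟨j, hj⟩), Fin.mk_lt_mk.mpr hij⟩

/-- The image of an edge under a strictly increasing vertex map. -/
def edgeMap {a b : ℕ} (f : Fin a → Fin b) (hf : StrictMono f) (e : Edge a) : Edge b :=
  ⟨(f e.1.1, f e.1.2), hf e.2⟩

/-- Containment of colorings: `K ⪯ L` via a strictly increasing vertex map that sends
the color of each edge to a `le`-larger color. -/
def ColLe {C : Type} (le : C → C → Prop) (K L : Coloring C) : Prop :=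
  ∃ f : Fin K.1 → Fin L.1, ∃ hf : StrictMono f,
    ∀ e : Edge K.1, le (K.2 e) (L.2 (edgeMap f hf e))

/-- A lower ideal of colorings. -/
def IsIdeal {C : Type} (le : C → C → Prop) (X : Set (Coloring C)) : Prop :=
  ∀ K L : Coloring C, ColLe le K L → L ∈ X → K ∈ X

/-- The recoloring `R_b`: edges of color `b` get color `0`, all other edges get color `1`. -/
def Rb {P : Type} [DecidableEq P] (b : P) (K : Coloring P) : Coloring (Fin 2) :=
  ⟨K.1, fun e => if K.2 e = b then 0 else 1⟩

/-! The coloring `χ` is recovered from its recolorings: an edge `e` has color `b` exactly when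
`R_b` gives it color `1` (the Lean value `0`), so `K ↦ (R_b K)_b` is injective on `X_n`, while
each single `R_c` maps `X_n` onto `Y^(c)_n`. -/

section Levels

variable {C D : Type}

theorem setOf_coloring_fst_eq_finite [Finite C] (n : ℕ) :
    {K : Coloring C | K.1 = n}.Finite := by
  refine (Set.finite_range (Sigma.mk (β := fun m => Edge m → C) n)).subset ?_
  rintro ⟨m, f⟩ rfl
  exact ⟨f, rfl⟩

instance finite_level [Finite C] (p : Coloring C → Prop) (n : ℕ) :
    Finite {K : Coloring C // p K ∧ K.1 = n} :=
  ((setOf_coloring_fst_eq_finite n).subset fun _ hK => hK.2).to_subtype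

theorem card_level_image_le [Finite C] (g : Coloring C → Coloring D)
    (hg : ∀ K, (g K).1 = K.1) (X : Set (Coloring C)) (n : ℕ) :
    Nat.card {L : Coloring D // L ∈ g '' X ∧ L.1 = n} ≤
      Nat.card {K : Coloring C // K ∈ X ∧ K.1 = n} := by
  refine Nat.card_le_card_of_surjective
    (fun K => ⟨g K.1, ⟨K.1, K.2.1, rfl⟩, (hg K.1).trans K.2.2⟩) ?_
  rintro ⟨L, ⟨K, hKX, rfl⟩, hL⟩
  exact ⟨⟨K, hKX, (hg K).symm.trans hL⟩, rfl⟩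

theorem card_level_le_prod_card_level_image {ι : Type} [Fintype ι] [Finite D]
    (g : ι → Coloring C → Coloring D) (hg : ∀ i K, (g i K).1 = K.1)
    (hinj : ∀ K L, K.1 = L.1 → (∀ i, g i K = g i L) → K = L)
    (X : Set (Coloring C)) (n : ℕ) :
    Nat.card {K : Coloring C // K ∈ X ∧ K.1 = n} ≤
      ∏ i, Nat.card {L : Coloring D // L ∈ g i '' X ∧ L.1 = n} := by
  rw [← Nat.card_pi]
  refine Nat.card_le_card_of_injective
    (fun K i => ⟨g i K.1, ⟨K.1, K.2.1, rfl⟩, (hg i K.1).trans K.2.2⟩) ?_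
  intro K L hKL
  exact Subtype.ext <| hinj _ _ (K.2.2.trans L.2.2.symm) fun i =>
    congrArg Subtype.val (congrFun hKL i)

end Levels

section Recoloring

variable {P : Type} [DecidableEq P]

@[simp]
theorem Rb_fst (b : P) (K : Coloring P) : (Rb b K).1 = K.1 := rfl

theorem Coloring.ext_of_Rb_eq {K L : Coloring P} (hsize : K.1 = L.1)
    (h : ∀ b, Rb b K = Rb b L) : K = L := by
  obtain ⟨m, χ⟩ := K
  obtain ⟨m', ψ⟩ := L
  obtain rfl : m = m' := hsize
  refine Sigma.ext rfl (heq_of_eq (funext fun e => ?_))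
  have hcol := congrFun (eq_of_heq (Sigma.mk.inj_iff.mp (h (χ e))).2) e
  by_contra hne
  simp [Ne.symm hne] at hcol

end Recoloring

theorem stmt_8 {P : Type} [Fintype P] [DecidableEq P]
    (X : Set (Coloring P)) (n : ℕ) (c : P) :
    Nat.card {K : Coloring (Fin 2) // K ∈ Rb c '' X ∧ K.1 = n} ≤
      Nat.card {K : Coloring P // K ∈ X ∧ K.1 = n} ∧
    Nat.card {K : Coloring P // K ∈ X ∧ K.1 = n} ≤
      ∏ b : P, Nat.card {K : Coloring (Fin 2) // K ∈ Rb b '' X ∧ K.1 = n} :=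
  ⟨card_level_image_le (Rb c) (Rb_fst c) X n,
    card_level_le_prod_card_level_image Rb Rb_fst (fun _ _ => Coloring.ext_of_Rb_eq) X n⟩
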